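/- arXiv:2503.19393 — 2 statements merged into one kernel-verified Lean document; each statement's English description precedes it below -/
import Mathlib

section
/- Let $\gamma\in(0,1)$, $\rho\in[0,1)$, $\alpha\in[0,1)$, $r\in(1,\infty]$ with $1/r=\alpha$, and let $u,v$ be weights on $\mathbb{R}^{n+1}$ (locally integrable, positive a.e.). If $(u,v)\in TA^+_{r,\infty}(\rho)$, i.e. $[u,v]_{TA^+_{r,\infty}(\rho)}:=\sup_R \big(\mathrm{ess\,sup}_{R^-(\rho)} u\big)\big(\fint_{R^+(\rho)} v^{-r'}\big)^{1/r'}<\infty$, then for every $f$ with $fv\in L^r(\mathbb{R}^{n+1})$ one has $\|M^{\rho+}_\alpha(f)\,u\|_{L^\infty}\le [u,v]_{TA^+_{r,\infty}(\rho)}\,\|fv\|_{L^r}$, where $M^{\rho+}_\alpha(f)(x,t):=\sup\{|R^+(\rho)|^\alpha \fint_{R^+(\rho)}|f| : R\in\mathcal{R}_p^{n+1},\ (x,t)\in R^-(\rho)\}$. -/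
open MeasureTheory Set ENNReal

noncomputable section

def pQ (n : ℕ) (x : Fin n → ℝ) (L : ℝ) : Set (Fin n → ℝ) :=
  Set.univ.pi fun i => Ioo (x i - L) (x i + L)

def pRectP (n : ℕ) (p γ : ℝ) (x : Fin n → ℝ) (t L : ℝ) : Set ((Fin n → ℝ) × ℝ) :=
  pQ n x L ×ˢ Ioo (t + γ * L ^ p) (t + L ^ p)

def pRectM (n : ℕ) (p γ : ℝ) (x : Fin n → ℝ) (t L : ℝ) : Set ((Fin n → ℝ) × ℝ) :=
  pQ n x L ×ˢ Ioo (t - L ^ p) (t - γ * L ^ p)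

/-- The average `⨍_A g` of an `ℝ≥0∞`-valued function, as a quotient of the lower
integral by the measure of the set. -/
def eavg {n : ℕ} (A : Set ((Fin n → ℝ) × ℝ)) (g : (Fin n → ℝ) × ℝ → ℝ≥0∞) : ℝ≥0∞ :=
  (∫⁻ z in A, g z) / volume A

/-- The uncentered parabolic fractional maximal operator with time lag `γ`:
`M^{γ+}_α f(z) = sup { |R⁺(γ)|^α ⨍_{R⁺(γ)} |f| : R parabolic rectangle, z ∈ R⁻(γ) }`. -/
def eMplus (n : ℕ) (p γ α : ℝ) (f : (Fin n → ℝ) × ℝ → ℝ) (z : (Fin n → ℝ) × ℝ) : ℝ≥0∞ :=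
  ⨆ (x : Fin n → ℝ) (t : ℝ) (L : ℝ) (_ : 0 < L) (_ : z ∈ pRectM n p γ x t L),
    (volume (pRectP n p γ x t L)) ^ α *
      eavg (pRectP n p γ x t L) (fun w => ENNReal.ofReal |f w|)

/-- The conjugate exponent `r' = r/(r-1)`. -/
def rconj (r : ℝ) : ℝ := r / (r - 1)

lemma ae_le_essSup_open {X : Type*} [TopologicalSpace X] [MeasurableSpace X]
    [SecondCountableTopology X] [OpensMeasurableSpace X]
    (μ : MeasureTheory.Measure X) (g : X → ℝ≥0∞) :
    ∀ᵐ z ∂μ, ∀ U : Set X, IsOpen U → z ∈ U → g z ≤ essSup g (μ.restrict U) := by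
  obtain ⟨B, hBc, -, hB⟩ := TopologicalSpace.exists_countable_basis X
  have h1 : ∀ᵐ z ∂μ, ∀ b ∈ B, z ∈ b → g z ≤ essSup g (μ.restrict b) := by
    rw [ae_ball_iff hBc]
    intro b hb
    rw [← ae_restrict_iff' (hB.isOpen hb).measurableSet]
    exact ae_le_essSup g
  filter_upwards [h1] with z hz U hU hzU
  obtain ⟨b, hbB, hzb, hbU⟩ := hB.exists_subset_of_mem_open hzU hU
  exact (hz b hbB hzb).trans (essSup_mono_measure' (Measure.restrict_mono hbU le_rfl))

lemma pRectM_isOpen (n : ℕ) (p γ : ℝ) (x : Fin n → ℝ) (t L : ℝ) :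
    IsOpen (pRectM n p γ x t L) :=
  (isOpen_set_pi Set.finite_univ fun _ _ => isOpen_Ioo).prod isOpen_Ioo

lemma vol_pRectP (n : ℕ) (p ρ : ℝ) (x : Fin n → ℝ) (t L : ℝ) :
    volume (pRectP n p ρ x t L)
      = ENNReal.ofReal (2 * L) ^ n * ENNReal.ofReal ((1 - ρ) * L ^ p) := by
  have h : volume (pRectP n p ρ x t L)
      = volume (pQ n x L) * volume (Ioo (t + ρ * L ^ p) (t + L ^ p)) := by
    rw [pRectP, Measure.volume_eq_prod, Measure.prod_prod]
  rw [h, pQ, volume_pi_pi]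
  have e1 : ∀ i : Fin n, x i + L - (x i - L) = 2 * L := fun i => by ring
  have e2 : t + L ^ p - (t + ρ * L ^ p) = (1 - ρ) * L ^ p := by ring
  simp only [Real.volume_Ioo, e1, e2, Finset.prod_const, Finset.card_univ, Fintype.card_fin]

/-- If `(u,v) ∈ TA⁺_{r,∞}(ρ)`, i.e. for every parabolic rectangle
`(ess sup_{R⁻(ρ)} u) (⨍_{R⁺(ρ)} v^{-r'})^{1/r'} ≤ K`, then
`‖M^{ρ+}_α(f) u‖_{L^∞} ≤ K ‖f v‖_{L^r}` whenever `f v ∈ L^r`. -/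
theorem stmt1 (p : ℝ) (hp : 1 < p) (n : ℕ) (γ ρ α r : ℝ)
    (hγ : γ ∈ Set.Ioo (0 : ℝ) 1) (hρ : ρ ∈ Set.Ico (0 : ℝ) 1)
    (hα : α ∈ Set.Ico (0 : ℝ) 1) (hr : 1 < r) (hra : 1 / r = α)
    (u v : (Fin n → ℝ) × ℝ → ℝ)
    (hu : LocallyIntegrable u volume) (hupos : ∀ᵐ z ∂(volume : Measure ((Fin n → ℝ) × ℝ)), 0 < u z)
    (hv : LocallyIntegrable v volume) (hvpos : ∀ᵐ z ∂(volume : Measure ((Fin n → ℝ) × ℝ)), 0 < v z)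
    (K : ℝ≥0∞)
    (hK : ∀ (x : Fin n → ℝ) (t L : ℝ), 0 < L →
      essSup (fun z => ENNReal.ofReal (u z)) (volume.restrict (pRectM n p ρ x t L)) *
        (eavg (pRectP n p ρ x t L) fun z => ENNReal.ofReal (v z ^ (-(rconj r)))) ^ (1 / rconj r)
        ≤ K)
    (f : (Fin n → ℝ) × ℝ → ℝ)
    (hf : MemLp (fun z => f z * v z) (ENNReal.ofReal r) volume) :
    ∀ᵐ z ∂(volume : Measure ((Fin n → ℝ) × ℝ)),
      eMplus n p ρ α f z * ENNReal.ofReal (u z) ≤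
        K * eLpNorm (fun z => f z * v z) (ENNReal.ofReal r) volume := by
  set r' := rconj r with hr'def
  have hrc : r.HolderConjugate r' := Real.HolderConjugate.conjExponent hr
  have hr'nn : (0:ℝ) ≤ 1 / r' := hrc.symm.one_div_nonneg
  have hβ : 1 / r' = 1 - α := by
    have h := hrc.inv_add_inv_eq_one
    rw [one_div, ← hra, one_div]
    linarith
  set N := eLpNorm (fun z => f z * v z) (ENNReal.ofReal r) volume with hN
  have hFmeas : AEMeasurable (fun w => ENNReal.ofReal |f w * v w|) volume :=
    ENNReal.measurable_ofReal.comp_aemeasurable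
      (continuous_abs.measurable.comp_aemeasurable hf.1.aemeasurable)
  have hvmeas : AEMeasurable v volume := hv.aestronglyMeasurable.aemeasurable
  have hGmeas : AEMeasurable (fun w => ENNReal.ofReal (v w)⁻¹) volume :=
    ENNReal.measurable_ofReal.comp_aemeasurable hvmeas.inv
  filter_upwards [ae_le_essSup_open volume (fun z => ENNReal.ofReal (u z))] with z hz
  simp only [eMplus, ENNReal.iSup_mul]
  refine iSup_le fun x => iSup_le fun t => iSup_le fun L => iSup_le fun hL => iSup_le fun hmem => ?_
  set RP := pRectP n p ρ x t L with hRP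
  set S := essSup (fun z => ENNReal.ofReal (u z)) (volume.restrict (pRectM n p ρ x t L)) with hSdef
  set Iv := ∫⁻ w in RP, ENNReal.ofReal (v w ^ (-r')) with hIv
  have hLp : (0:ℝ) < L ^ p := Real.rpow_pos_of_pos hL p
  have hVP0 : volume RP ≠ 0 := by
    rw [hRP, vol_pRectP]
    refine mul_ne_zero (pow_ne_zero _ (ENNReal.ofReal_pos.mpr (by linarith)).ne') ?_
    exact (ENNReal.ofReal_pos.mpr (mul_pos (by linarith [hρ.2]) hLp)).ne'
  have hVPtop : volume RP ≠ ⊤ := by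
    rw [hRP, vol_pRectP]
    exact ENNReal.mul_ne_top (ENNReal.pow_ne_top ENNReal.ofReal_ne_top) ENNReal.ofReal_ne_top
  -- Hölder
  have hIf : (∫⁻ w in RP, ENNReal.ofReal |f w|) ≤ N * Iv ^ (1 / r') := by
    have step1 : (∫⁻ w in RP, ENNReal.ofReal |f w|)
        = ∫⁻ w in RP,
            ((fun w => ENNReal.ofReal |f w * v w|) * fun w => ENNReal.ofReal (v w)⁻¹) w := by
      refine lintegral_congr_ae ?_
      filter_upwards [ae_restrict_of_ae hvpos] with w hw
      simp only [Pi.mul_apply]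
      rw [← ENNReal.ofReal_mul (abs_nonneg _), abs_mul, abs_of_pos hw,
        mul_inv_cancel_right₀ hw.ne']
    have step2 := ENNReal.lintegral_mul_le_Lp_mul_Lq (volume.restrict RP) hrc
      hFmeas.restrict hGmeas.restrict
    have hGv : (∫⁻ w in RP, ENNReal.ofReal (v w)⁻¹ ^ r') = Iv := by
      refine lintegral_congr_ae ?_
      filter_upwards [ae_restrict_of_ae hvpos] with w hw
      rw [ENNReal.ofReal_rpow_of_nonneg (inv_nonneg.mpr hw.le) hrc.symm.nonneg,
        Real.inv_rpow hw.le, ← Real.rpow_neg hw.le]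
    have hNle : (∫⁻ w in RP, ENNReal.ofReal |f w * v w| ^ r) ^ (1 / r) ≤ N := by
      have : (∫⁻ w in RP, ENNReal.ofReal |f w * v w| ^ r)
          ≤ ∫⁻ w, ENNReal.ofReal |f w * v w| ^ r :=
        lintegral_mono' Measure.restrict_le_self le_rfl
      refine (ENNReal.rpow_le_rpow this (by positivity)).trans_eq ?_
      rw [hN, eLpNorm_eq_lintegral_rpow_enorm_toReal
        (by simp [ENNReal.ofReal_eq_zero]; linarith) ENNReal.ofReal_ne_top,
        ENNReal.toReal_ofReal (by linarith)]
      simp_rw [Real.enorm_eq_ofReal_abs]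
    calc (∫⁻ w in RP, ENNReal.ofReal |f w|)
        = ∫⁻ w in RP,
            ((fun w => ENNReal.ofReal |f w * v w|) * fun w => ENNReal.ofReal (v w)⁻¹) w := step1
      _ ≤ (∫⁻ w in RP, ENNReal.ofReal |f w * v w| ^ r) ^ (1 / r)
            * (∫⁻ w in RP, ENNReal.ofReal (v w)⁻¹ ^ r') ^ (1 / r') := step2
      _ ≤ N * Iv ^ (1 / r') := by rw [hGv]; exact mul_le_mul_left hNle _
  have hS : ENNReal.ofReal (u z) ≤ S := hz _ (pRectM_isOpen n p ρ x t L) hmem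
  have hKx : S * (Iv / volume RP) ^ (1 / r') ≤ K := by
    have h := hK x t L hL
    simpa [eavg, hSdef, hIv, hRP] using h
  calc volume RP ^ α * eavg RP (fun w => ENNReal.ofReal |f w|) * ENNReal.ofReal (u z)
      ≤ volume RP ^ α * ((N * Iv ^ (1 / r')) / volume RP) * S := by
        unfold eavg
        exact mul_le_mul' (mul_le_mul_right (ENNReal.div_le_div_right hIf _) _) hS
    _ = N * ((volume RP ^ α * (volume RP)⁻¹ * Iv ^ (1 / r')) * S) := by
        rw [div_eq_mul_inv]; ring
    _ = N * ((Iv / volume RP) ^ (1 / r') * S) := by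
        have key : volume RP ^ α * (volume RP)⁻¹ = (volume RP ^ (1 / r'))⁻¹ := by
          rw [← ENNReal.rpow_neg_one (volume RP), ← ENNReal.rpow_add α (-1) hVP0 hVPtop,
            show α + -1 = -(1 / r') by linarith, ENNReal.rpow_neg]
        rw [key, ENNReal.div_rpow_of_nonneg _ _ hr'nn, ENNReal.div_eq_inv_mul]
    _ ≤ N * K := mul_le_mul_right (by rw [mul_comm]; exact hKx) _
    _ = K * N := mul_comm _ _


end
end

section
/- Let $\gamma\in(0,1)$, $\rho\in[0,1)$, $\alpha\in[0,1)$, $r\in(1,\infty]$ with $1/r=\alpha$, and let $u,v$ be weights on $\mathbb{R}^{n+1}$. Suppose there is a constant $C>0$ such that $\|M^{\rho+}_\alpha(f)\,u\|_{L^\infty}\le C\|fv\|_{L^r}$ for all $f\in L^r(v^r)$. Then $(u,v)\in TA^+_{r,\infty}(\rho)$, i.e. $\sup_{R\in\mathcal{R}_p^{n+1}} \big(\mathrm{ess\,sup}_{R^-(\rho)} u\big)\big(\fint_{R^+(\rho)} v^{-r'}\big)^{1/r'}\lesssim C$. -/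
open MeasureTheory Set ENNReal

noncomputable section

/-- If `‖M^{ρ+}_α(f) u‖_{L^∞} ≤ C ‖f v‖_{L^r}` for all `f` with `f v ∈ L^r`, then
`(u,v) ∈ TA⁺_{r,∞}(ρ)`, i.e. the two-weight constant
`sup_R (ess sup_{R⁻(ρ)} u)(⨍_{R⁺(ρ)} v^{-r'})^{1/r'}` is at most a structural
constant times `C`. -/
theorem stmt2 (p : ℝ) (hp : 1 < p) (n : ℕ) (γ ρ α r : ℝ)
    (hγ : γ ∈ Set.Ioo (0 : ℝ) 1) (hρ : ρ ∈ Set.Ico (0 : ℝ) 1)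
    (hα : α ∈ Set.Ico (0 : ℝ) 1) (hr : 1 < r) (hra : 1 / r = α)
    (u v : (Fin n → ℝ) × ℝ → ℝ)
    (hum : Measurable u) (hvm : Measurable v)
    (hu : LocallyIntegrable u volume) (hupos : ∀ᵐ z ∂(volume : Measure ((Fin n → ℝ) × ℝ)), 0 < u z)
    (hv : LocallyIntegrable v volume) (hvpos : ∀ᵐ z ∂(volume : Measure ((Fin n → ℝ) × ℝ)), 0 < v z)
    (C : ℝ) (hC : 0 < C)
    (hbound : ∀ f : (Fin n → ℝ) × ℝ → ℝ,
      MemLp (fun z => f z * v z) (ENNReal.ofReal r) volume →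
      ∀ᵐ z ∂(volume : Measure ((Fin n → ℝ) × ℝ)),
        eMplus n p ρ α f z * ENNReal.ofReal (u z) ≤
          ENNReal.ofReal C * eLpNorm (fun z => f z * v z) (ENNReal.ofReal r) volume) :
    ∃ C' : ℝ, 0 < C' ∧ ∀ (x : Fin n → ℝ) (t L : ℝ), 0 < L →
      essSup (fun z => ENNReal.ofReal (u z)) (volume.restrict (pRectM n p ρ x t L)) *
        (eavg (pRectP n p ρ x t L) fun z => ENNReal.ofReal (v z ^ (-(rconj r)))) ^ (1 / rconj r)
        ≤ ENNReal.ofReal (C' * C) := by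
  classical
  obtain ⟨hρ0, hρ1⟩ := hρ
  have hα0 : 0 ≤ α := hα.1
  have hr0 : (0:ℝ) < r := one_pos.trans hr
  have hrne : r ≠ 0 := hr0.ne'
  have hr1 : (0:ℝ) < r - 1 := by linarith
  set s := rconj r with hsdef
  have hs : 0 < s := div_pos hr0 hr1
  have hsne : s ≠ 0 := hs.ne'
  have hsum : 1/r + 1/s = 1 := by
    rw [hsdef]; unfold rconj; field_simp; ring
  have e1 : 1 - 1/r = 1/s := by linarith
  have e2 : α - 1 = -(1/s) := by rw [← hra]; linarith
  have ce : (1-s) * r = -s := by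
    rw [hsdef]; unfold rconj; field_simp; ring
  have ce2 : 1 - 1/s = 1/r := by linarith
  refine ⟨1, one_pos, ?_⟩
  intro x t L hL
  set Rp := pRectP n p ρ x t L with hRpdef
  set Rm := pRectM n p ρ x t L with hRmdef
  have hRpm : MeasurableSet Rp :=
    (MeasurableSet.univ_pi fun i => measurableSet_Ioo).prod measurableSet_Ioo
  have hRmm : MeasurableSet Rm :=
    (MeasurableSet.univ_pi fun i => measurableSet_Ioo).prod measurableSet_Ioo
  have hLp : 0 < L ^ p := Real.rpow_pos_of_pos hL p
  have hvolc : volume Rp = (∏ _i : Fin n, ENNReal.ofReal (2*L)) * ENNReal.ofReal (L^p - ρ*L^p) := by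
    rw [hRpdef, pRectP, pQ, Measure.volume_eq_prod, Measure.prod_prod, volume_pi_pi]
    congr 1
    · exact Finset.prod_congr rfl fun i _ => by rw [Real.volume_Ioo]; congr 1; ring
    · rw [Real.volume_Ioo]; congr 1; ring
  have hvol0 : volume Rp ≠ 0 := by
    rw [hvolc]
    apply mul_ne_zero
    · rw [Finset.prod_ne_zero_iff]
      intro i _
      simp only [ne_eq, ENNReal.ofReal_eq_zero, not_le]
      linarith
    · simp only [ne_eq, ENNReal.ofReal_eq_zero, not_le]
      nlinarith
  have hvolt : volume Rp ≠ ∞ := by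
    rw [hvolc]
    exact ENNReal.mul_ne_top
      (ENNReal.prod_lt_top (fun i _ => ENNReal.ofReal_lt_top)).ne ENNReal.ofReal_ne_top
  set c : ℝ≥0∞ := ENNReal.ofReal C with hc
  have hc0 : c ≠ 0 := by simp [hc, ENNReal.ofReal_eq_zero, not_le, hC]
  have hct : c ≠ ∞ := ENNReal.ofReal_ne_top
  set A := essSup (fun z => ENNReal.ofReal (u z)) (volume.restrict Rm) with hA
  set j : ℕ → ((Fin n → ℝ) × ℝ) → ℝ := fun N z => min (v z ^ (-s)) ((N:ℝ)+1) with hj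
  have hjm : ∀ N, Measurable (j N) := by intro N; rw [hj]; fun_prop
  set I : ℕ → ℝ≥0∞ := fun N => ∫⁻ z in Rp, ENNReal.ofReal (j N z) with hI
  have key : ∀ N : ℕ, I N ≤ (c / A) ^ s * volume Rp := by
    intro N
    set fN := Rp.indicator (j N) with hfN
    have hfNm : Measurable fN := (hjm N).indicator hRpm
    -- pointwise bound
    have hpt : ∀ z, 0 < v z →
        ENNReal.ofReal |fN z * v z| ^ r ≤ Rp.indicator (fun w => ENNReal.ofReal (j N w)) z := by
      intro z hvz
      by_cases hz : z ∈ Rp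
      · rw [Set.indicator_of_mem hz, hfN, Set.indicator_of_mem hz]
        have hjpos : 0 ≤ j N z := le_min (Real.rpow_pos_of_pos hvz _).le (by positivity)
        have habs : |j N z * v z| = j N z * v z := abs_of_nonneg (mul_nonneg hjpos hvz.le)
        rw [habs, ENNReal.ofReal_rpow_of_nonneg (mul_nonneg hjpos hvz.le) hr0.le]
        apply ENNReal.ofReal_le_ofReal
        rcases le_or_gt (v z ^ (-s)) ((N:ℝ)+1) with hcase | hcase
        · have hje : j N z = v z ^ (-s) := min_eq_left hcase
          rw [hje]
          have h1 : v z ^ (-s) * v z = v z ^ (1 - s) := by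
            nth_rewrite 2 [← Real.rpow_one (v z)]
            rw [← Real.rpow_add hvz]
            ring_nf
          rw [h1, ← Real.rpow_mul hvz.le]
          rw [show (1-s) * r = -s from ce]
        · have hje : j N z = (N:ℝ)+1 := min_eq_right hcase.le
          set Nr : ℝ := (N:ℝ)+1 with hNr
          have hN : 0 < Nr := by positivity
          have h1 : Nr ^ (1/s) ≤ (v z ^ (-s)) ^ (1/s) :=
            Real.rpow_le_rpow hN.le hcase.le (by positivity)
          have h2 : (v z ^ (-s)) ^ (1/s) = (v z)⁻¹ := by
            rw [← Real.rpow_mul hvz.le, show -s * (1/s) = -1 by field_simp, Real.rpow_neg_one]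
          rw [h2] at h1
          have h3 : v z ≤ Nr ^ (-(1/s)) := by
            rw [Real.rpow_neg hN.le]
            exact (le_inv_comm₀ hvz (by positivity)).mpr h1
          have h4 : Nr * v z ≤ Nr ^ (1/r : ℝ) := by
            have := mul_le_mul_of_nonneg_left h3 hN.le
            calc Nr * v z ≤ Nr * Nr ^ (-(1/s)) := this
              _ = Nr ^ (1 + -(1/s)) := by
                  rw [Real.rpow_add hN, Real.rpow_one]
              _ = Nr ^ (1/r : ℝ) := by rw [show (1:ℝ) + -(1/s) = 1/r by linarith]
          rw [hje]
          calc (Nr * v z) ^ r ≤ (Nr ^ (1/r : ℝ)) ^ r :=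
                Real.rpow_le_rpow (by positivity) h4 hr0.le
            _ = Nr := by
                rw [← Real.rpow_mul hN.le, show 1/r*r = 1 by field_simp, Real.rpow_one]
      · rw [Set.indicator_of_notMem hz, hfN, Set.indicator_of_notMem hz]
        simp [Real.zero_rpow hrne, ENNReal.zero_rpow_of_pos hr0]
    have hIN_le : ∫⁻ z, ENNReal.ofReal |fN z * v z| ^ r ≤ I N := by
      calc ∫⁻ z, ENNReal.ofReal |fN z * v z| ^ r
          ≤ ∫⁻ z, Rp.indicator (fun w => ENNReal.ofReal (j N w)) z :=
            lintegral_mono_ae (hvpos.mono fun z hz => hpt z hz)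
        _ = I N := by rw [lintegral_indicator hRpm]
    have hIN_top : I N < ∞ := by
      calc I N ≤ ∫⁻ _ in Rp, ENNReal.ofReal ((N:ℝ)+1) :=
            lintegral_mono fun z => ENNReal.ofReal_le_ofReal (min_le_right _ _)
        _ = ENNReal.ofReal ((N:ℝ)+1) * volume Rp := setLIntegral_const _ _
        _ < ∞ := ENNReal.mul_lt_top ENNReal.ofReal_lt_top hvolt.lt_top
    have hIN_0 : I N ≠ 0 := by
      intro h0
      have hz := (lintegral_eq_zero_iff ((hjm N).ennreal_ofReal)).mp h0
      have hv' := ae_restrict_of_ae (s := Rp) hvpos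
      have hFalse : ∀ᵐ z ∂(volume.restrict Rp), False := by
        filter_upwards [hz, hv'] with z h1 h2
        have hpos : 0 < j N z := lt_min (Real.rpow_pos_of_pos h2 _) (by positivity)
        simp only [Pi.zero_apply, ENNReal.ofReal_eq_zero] at h1
        linarith
      have : volume.restrict Rp = 0 := by
        rwa [Filter.eventually_false_iff_eq_bot, ae_eq_bot] at hFalse
      exact hvol0 (Measure.restrict_eq_zero.mp this)
    have hofr0 : (ENNReal.ofReal r) ≠ 0 := by
      simp [ENNReal.ofReal_eq_zero, not_le, hr0]
    have heLp : eLpNorm (fun z => fN z * v z) (ENNReal.ofReal r) volume ≤ (I N) ^ (1/r) := by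
      rw [eLpNorm_eq_lintegral_rpow_enorm_toReal hofr0 ENNReal.ofReal_ne_top]
      simp only [ENNReal.toReal_ofReal hr0.le]
      apply ENNReal.rpow_le_rpow _ (by positivity)
      calc ∫⁻ z, (‖fN z * v z‖₊ : ℝ≥0∞) ^ r
          = ∫⁻ z, ENNReal.ofReal |fN z * v z| ^ r := by
            simp only [← enorm_eq_nnnorm, ← ofReal_norm, Real.norm_eq_abs]
        _ ≤ I N := hIN_le
    have hmem : MemLp (fun z => fN z * v z) (ENNReal.ofReal r) volume :=
      ⟨(hfNm.mul hvm).aestronglyMeasurable,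
        lt_of_le_of_lt heLp (ENNReal.rpow_lt_top_of_nonneg (by positivity) hIN_top.ne)⟩
    have hb := hbound fN hmem
    set target := volume Rp ^ α * eavg Rp (fun w => ENNReal.ofReal |fN w|) with htar
    have hlow : ∀ z ∈ Rm, target ≤ eMplus n p ρ α fN z := by
      intro z hz
      rw [eMplus]
      exact le_iSup_of_le x (le_iSup_of_le t (le_iSup_of_le L (le_iSup_of_le hL
        (le_iSup_of_le hz le_rfl))))
    set B := c * eLpNorm (fun z => fN z * v z) (ENNReal.ofReal r) volume with hB
    have hBt : B ≠ ∞ :=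
      (ENNReal.mul_lt_top hct.lt_top
        (lt_of_le_of_lt heLp (ENNReal.rpow_lt_top_of_nonneg (by positivity) hIN_top.ne))).ne
    have hgeq : I N ≤ ∫⁻ z in Rp, ENNReal.ofReal |fN z| := by
      apply setLIntegral_mono (by fun_prop)
      intro z hz
      rw [hfN, Set.indicator_of_mem hz]
      exact ENNReal.ofReal_le_ofReal (le_abs_self _)
    have htar0 : target ≠ 0 := by
      have h1 : (0:ℝ≥0∞) < volume Rp ^ α :=
        ENNReal.rpow_pos (pos_iff_ne_zero.mpr hvol0) hvolt
      have h2 : (0:ℝ≥0∞) < I N / volume Rp :=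
        ENNReal.div_pos hIN_0 hvolt
      have h3 : I N / volume Rp ≤ eavg Rp (fun w => ENNReal.ofReal |fN w|) := by
        simp only [eavg]
        exact ENNReal.div_le_div_right hgeq _
      rw [htar]
      exact (mul_pos h1.ne' (h2.trans_le h3).ne').ne'
    have hb' : ∀ᵐ z ∂(volume.restrict Rm), target * ENNReal.ofReal (u z) ≤ B := by
      filter_upwards [ae_restrict_of_ae hb, ae_restrict_mem hRmm] with z h1 h2
      exact le_trans (mul_le_mul_left (hlow z h2) _) h1
    have hA_le : A ≤ B / target := by
      refine essSup_le_of_ae_le _ ?_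
      filter_upwards [hb'] with z hz
      exact (ENNReal.le_div_iff_mul_le (Or.inl htar0) (Or.inr hBt)).mpr
        (by rwa [mul_comm] at hz)
    have hAt : A * target ≤ B :=
      (ENNReal.le_div_iff_mul_le (Or.inl htar0) (Or.inr hBt)).mp hA_le
    have h3 : I N / volume Rp ≤ eavg Rp (fun w => ENNReal.ofReal |fN w|) := by
      simp only [eavg]
      exact ENNReal.div_le_div_right hgeq _
    have hmain : A * (volume Rp ^ α * (I N / volume Rp)) ≤ c * (I N) ^ (1/r) := by
      calc A * (volume Rp ^ α * (I N / volume Rp)) ≤ A * target := by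
            rw [htar]
            exact mul_le_mul_right (mul_le_mul_right h3 _) _
        _ ≤ B := hAt
        _ ≤ c * (I N) ^ (1/r) := mul_le_mul_right heLp _
    -- algebra
    have hlhs : (I N / volume Rp) ^ (1/s) = I N ^ (1/s) * volume Rp ^ (-(1/s)) := by
      rw [ENNReal.div_rpow_of_nonneg _ _ (by positivity), ENNReal.rpow_neg,
        div_eq_mul_inv]
    have hrhs : volume Rp ^ α * (I N / volume Rp) * I N ^ (-(1/r)) =
        I N ^ (1/s) * volume Rp ^ (-(1/s)) := by
      rw [div_eq_mul_inv, ← ENNReal.rpow_neg_one (volume Rp)]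
      calc volume Rp ^ α * (I N * volume Rp ^ (-1:ℝ)) * I N ^ (-(1/r))
          = (I N * I N ^ (-(1/r))) * (volume Rp ^ α * volume Rp ^ (-1:ℝ)) := by ring
        _ = (I N ^ (1:ℝ) * I N ^ (-(1/r))) * (volume Rp ^ α * volume Rp ^ (-1:ℝ)) := by
            rw [ENNReal.rpow_one]
        _ = I N ^ (1 + -(1/r)) * volume Rp ^ (α + -1) := by
            rw [ENNReal.rpow_add _ _ hIN_0 hIN_top.ne, ENNReal.rpow_add _ _ hvol0 hvolt]
        _ = I N ^ (1/s) * volume Rp ^ (-(1/s)) := by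
            rw [show (1:ℝ) + -(1/r) = 1/s by linarith, show α + -1 = -(1/s) by linarith]
    have hperN : A * (I N / volume Rp) ^ (1/s) ≤ c := by
      calc A * (I N / volume Rp) ^ (1/s)
          = (A * (volume Rp ^ α * (I N / volume Rp))) * I N ^ (-(1/r)) := by
            rw [hlhs, ← hrhs]; ring
        _ ≤ (c * I N ^ (1/r)) * I N ^ (-(1/r)) := mul_le_mul_left hmain _
        _ = c * (I N ^ (1/r) * I N ^ (-(1/r))) := by ring
        _ = c := by
            rw [← ENNReal.rpow_add _ _ hIN_0 hIN_top.ne,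
              show 1/r + -(1/r) = 0 by ring, ENNReal.rpow_zero, mul_one]
    have h5 : (I N / volume Rp) ^ (1/s) ≤ c / A :=
      (ENNReal.le_div_iff_mul_le (Or.inr hc0) (Or.inr hct)).mpr (by rwa [mul_comm] at hperN)
    have h6 : I N / volume Rp ≤ (c / A) ^ s := by
      have h := ENNReal.rpow_le_rpow (z := s) h5 hs.le
      rwa [← ENNReal.rpow_mul, show 1/s*s = 1 by field_simp, ENNReal.rpow_one] at h
    exact (ENNReal.div_le_iff_le_mul (Or.inl hvol0) (Or.inl hvolt)).mp h6
  -- pass to the limit N → ∞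
  have hmono : Monotone (fun N : ℕ => fun z => ENNReal.ofReal (j N z)) := by
    intro N M hNM z
    apply ENNReal.ofReal_le_ofReal
    apply min_le_min le_rfl
    have : (N:ℝ) ≤ M := Nat.cast_le.mpr hNM
    linarith
  have hptsup : ∀ z, (⨆ N : ℕ, ENNReal.ofReal (j N z)) = ENNReal.ofReal (v z ^ (-s)) := by
    intro z
    apply le_antisymm
    · exact iSup_le fun N => ENNReal.ofReal_le_ofReal (min_le_left _ _)
    · obtain ⟨N, hN⟩ := exists_nat_ge (v z ^ (-s))
      refine le_iSup_of_le N (le_of_eq ?_)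
      rw [hj]
      simp only
      rw [min_eq_left (by linarith)]
  have hIle : (∫⁻ z in Rp, ENNReal.ofReal (v z ^ (-s))) = ⨆ N, I N := by
    simp_rw [← hptsup]
    exact lintegral_iSup (fun N => (hjm N).ennreal_ofReal) hmono
  have hItot : (∫⁻ z in Rp, ENNReal.ofReal (v z ^ (-s))) ≤ (c/A)^s * volume Rp := by
    rw [hIle]
    exact iSup_le key
  have h7 : (∫⁻ z in Rp, ENNReal.ofReal (v z ^ (-s))) / volume Rp ≤ (c/A)^s :=
    (ENNReal.div_le_iff_le_mul (Or.inl hvol0) (Or.inl hvolt)).mpr hItot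
  have h8 : ((∫⁻ z in Rp, ENNReal.ofReal (v z ^ (-s))) / volume Rp) ^ (1/s) ≤ c / A := by
    have h := ENNReal.rpow_le_rpow (z := 1/s) h7 (by positivity)
    rwa [← ENNReal.rpow_mul, show s * (1/s) = 1 by field_simp, ENNReal.rpow_one] at h
  calc A * (eavg Rp fun z => ENNReal.ofReal (v z ^ (-s))) ^ (1/s)
      ≤ A * (c / A) := by
        apply mul_le_mul_right
        simpa only [eavg] using h8
    _ ≤ c := ENNReal.mul_div_le
    _ = ENNReal.ofReal (1 * C) := by rw [one_mul]

end
end
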